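/- Ben-David domain adaptation bound: for any hypothesis h in a class H of binary classifiers, the target risk satisfies R_T(h) ≤ R_S(h) + (1/2)·d_{H∆H}(S,T) + λ, where λ = min_{h'∈H}(R_S(h', h_S) + R_T(h', h_T)), R_D(h, f) = Pr_{x∼D}[h(x) ≠ f(x)], h_S and h_T are the labeling functions, and d_{H∆H}(S,T) = 2·sup_{h,h'∈H}|Pr_{x∼S}[h≠h'] − Pr_{x∼T}[h≠h']|. -/
import Mathlib


open MeasureTheory

lemma prob_toReal_le_one {D : Type*} [MeasurableSpace D] (μ : Measure D)
    [IsProbabilityMeasure μ] (A : Set D) : (μ A).toReal ≤ 1 := by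
  have := prob_le_one (μ := μ) (s := A)
  calc (μ A).toReal ≤ (1 : ENNReal).toReal :=
        ENNReal.toReal_mono (by simp) this
    _ = 1 := by simp

lemma risk_triangle {D : Type*} [MeasurableSpace D] (μ : Measure D)
    [IsProbabilityMeasure μ] (a b c : D → Bool) :
    (μ {x | a x ≠ c x}).toReal ≤ (μ {x | a x ≠ b x}).toReal + (μ {x | b x ≠ c x}).toReal := by
  have hsub : {x | a x ≠ c x} ⊆ {x | a x ≠ b x} ∪ {x | b x ≠ c x} := by
    intro x hx
    by_cases hab : a x = b x
    · right; simp only [Set.mem_setOf_eq]; rw [← hab]; exact hx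
    · left; exact hab
  have h1 : μ {x | a x ≠ c x} ≤ μ {x | a x ≠ b x} + μ {x | b x ≠ c x} :=
    le_trans (measure_mono hsub) (measure_union_le _ _)
  have hfin : μ {x | a x ≠ b x} + μ {x | b x ≠ c x} ≠ ⊤ :=
    ENNReal.add_ne_top.mpr ⟨measure_ne_top _ _, measure_ne_top _ _⟩
  calc (μ {x | a x ≠ c x}).toReal
      ≤ (μ {x | a x ≠ b x} + μ {x | b x ≠ c x}).toReal := ENNReal.toReal_mono hfin h1
    _ = (μ {x | a x ≠ b x}).toReal + (μ {x | b x ≠ c x}).toReal :=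
        ENNReal.toReal_add (measure_ne_top _ _) (measure_ne_top _ _)

/-- Ben-David domain adaptation bound:
`R_T(h) ≤ R_S(h) + (1/2)·d_{HΔH}(S,T) + λ` for every `h ∈ H`. -/
theorem stmt14 {D : Type*} [MeasurableSpace D]
    (S T : Measure D) [IsProbabilityMeasure S] [IsProbabilityMeasure T]
    (H : Set (D → Bool)) (hS hT : D → Bool)
    (R : Measure D → (D → Bool) → (D → Bool) → ℝ)
    (hR : ∀ μ h f, R μ h f = (μ {x | h x ≠ f x}).toReal)
    (lam : ℝ)
    (hlam : lam = sInf {r : ℝ | ∃ h' ∈ H, r = R S h' hS + R T h' hT})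
    (hattained : ∃ h' ∈ H, R S h' hS + R T h' hT = lam)
    (dHH : ℝ)
    (hd : dHH = 2 * sSup {r : ℝ | ∃ h ∈ H, ∃ h' ∈ H,
      r = |(S {x | h x ≠ h' x}).toReal - (T {x | h x ≠ h' x}).toReal|}) :
    ∀ h ∈ H, R T h hT ≤ R S h hS + (1/2) * dHH + lam := by
  intro h hH
  obtain ⟨g, hg, hge⟩ := hattained
  set Sig : Set ℝ := {r : ℝ | ∃ h ∈ H, ∃ h' ∈ H,
      r = |(S {x | h x ≠ h' x}).toReal - (T {x | h x ≠ h' x}).toReal|} with hSig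
  have hbdd : BddAbove Sig := by
    refine ⟨1, ?_⟩
    rintro r ⟨a, _, b, _, rfl⟩
    rw [abs_sub_le_iff]
    constructor
    · linarith [prob_toReal_le_one S {x | a x ≠ b x}, ENNReal.toReal_nonneg (a := T {x | a x ≠ b x})]
    · linarith [prob_toReal_le_one T {x | a x ≠ b x}, ENNReal.toReal_nonneg (a := S {x | a x ≠ b x})]
  have hmem : |(S {x | h x ≠ g x}).toReal - (T {x | h x ≠ g x}).toReal| ∈ Sig :=
    ⟨h, hH, g, hg, rfl⟩
  have hsup : |(S {x | h x ≠ g x}).toReal - (T {x | h x ≠ g x}).toReal| ≤ sSup Sig :=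
    le_csSup hbdd hmem
  have key : (T {x | h x ≠ g x}).toReal ≤ (S {x | h x ≠ g x}).toReal + (1/2) * dHH := by
    have : (T {x | h x ≠ g x}).toReal - (S {x | h x ≠ g x}).toReal
        ≤ |(S {x | h x ≠ g x}).toReal - (T {x | h x ≠ g x}).toReal| := by
      rw [abs_sub_comm]; exact le_abs_self _
    rw [hd]; linarith
  have t1 : (T {x | h x ≠ hT x}).toReal
      ≤ (T {x | h x ≠ g x}).toReal + (T {x | g x ≠ hT x}).toReal :=
    risk_triangle T h g hT
  have t2 : (S {x | h x ≠ g x}).toReal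
      ≤ (S {x | h x ≠ hS x}).toReal + (S {x | hS x ≠ g x}).toReal :=
    risk_triangle S h hS g
  have hswap : (S {x | hS x ≠ g x}).toReal = (S {x | g x ≠ hS x}).toReal := by
    have : {x | hS x ≠ g x} = {x | g x ≠ hS x} := by ext x; simp [ne_comm]
    rw [this]
  rw [hR] at hge ⊢
  rw [hR] at hge
  simp only [hR]
  rw [← hge]
  linarith
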